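/- arXiv:2107.06965 — 3 statements merged into one kernel-verified Lean document; each statement's English description precedes it below -/
import Mathlib

section
/- Let f : [0,1] → ℝ be continuous and let w ∈ ℝ^{n−1} be the vector with components w_j = Σ_{i=1}^{n−1} G(x_j, x_i) · ((h_i + h_{i+1})/2) · f(x_i). Then w solves the finite difference system S w = W f̃, where f̃ = (f(x_1), …, f(x_{n−1}))ᵀ; that is, the finite difference solution u^{FD} = S⁻¹(W f̃) coincides with w. -/
/-!
For a fixed node `s`, `G(·, s)` vanishes at `0` and `1` and is linear between consecutive nodes
except for a kink at `s`, where its slope drops by `1`. Row `j` of `S` applied to nodal values is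
minus the jump of slope at `x_j` of their piecewise-linear interpolant, so `S` times the matrix
`(G(x_j, x_i))` is the identity, and `w = G W f̃` satisfies `S w = W f̃`.
-/

/-- The Green function of `-u'' = f` on `(0,1)` with homogeneous Dirichlet boundary
conditions: `G(x,s) = s(1-x)` if `s ≤ x` and `G(x,s) = x(1-s)` if `x < s`. -/
noncomputable def greenFn (a s : ℝ) : ℝ :=
  if s ≤ a then s * (1 - a) else a * (1 - s)

/-- The `(n-1) × (n-1)` tridiagonal stiffness matrix; the interior index `i : Fin (n-1)`
corresponds to the node `x (i+1)`, and `h_j = x j - x (j-1)`. -/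
noncomputable def stiff (n : ℕ) (x : ℕ → ℝ) :
    Matrix (Fin (n - 1)) (Fin (n - 1)) ℝ := fun i j =>
  if (i : ℕ) = (j : ℕ) then
    1 / (x ((i : ℕ) + 1) - x (i : ℕ)) + 1 / (x ((i : ℕ) + 2) - x ((i : ℕ) + 1))
  else if (j : ℕ) = (i : ℕ) + 1 then -(1 / (x ((i : ℕ) + 2) - x ((i : ℕ) + 1)))
  else if (i : ℕ) = (j : ℕ) + 1 then -(1 / (x ((i : ℕ) + 1) - x (i : ℕ)))
  else 0

/-- The `(n-1) × (n-1)` diagonal weight matrix with `W_{jj} = (h_j + h_{j+1})/2`,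
where the interior index `j : Fin (n-1)` corresponds to the node `x (j+1)`. -/
noncomputable def weightMat (n : ℕ) (x : ℕ → ℝ) :
    Matrix (Fin (n - 1)) (Fin (n - 1)) ℝ :=
  Matrix.diagonal fun j : Fin (n - 1) => (x ((j : ℕ) + 2) - x (j : ℕ)) / 2

open Finset Matrix

lemma greenFn_secondDiff {a b c s : ℝ} (hab : a < b) (hbc : b < c)
    (hs : s ≤ a ∨ s = b ∨ c ≤ s) :
    -(1 / (b - a)) * greenFn a s + (1 / (b - a) + 1 / (c - b)) * greenFn b s
      - 1 / (c - b) * greenFn c s = if s = b then 1 else 0 := by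
  have hba : b - a ≠ 0 := sub_ne_zero.mpr hab.ne'
  have hcb : c - b ≠ 0 := sub_ne_zero.mpr hbc.ne'
  rcases hs with hs | rfl | hs
  · rw [greenFn, greenFn, greenFn, if_pos hs, if_pos (by linarith), if_pos (by linarith),
      if_neg (by linarith)]
    field_simp
    ring
  · rw [greenFn, greenFn, greenFn, if_neg (not_le.mpr hab), if_pos le_rfl, if_pos hbc.le,
      if_pos rfl]
    field_simp
    ring
  · have hgc : greenFn c s = c * (1 - s) := by
      unfold greenFn
      split_ifs with h
      · rw [le_antisymm h hs]
      · rfl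
    rw [greenFn, greenFn, hgc, if_neg (by linarith), if_neg (by linarith), if_neg (by linarith)]
    field_simp
    ring

lemma greenFn_zero_left {s : ℝ} (hs : 0 ≤ s) : greenFn 0 s = 0 := by
  unfold greenFn
  split_ifs with h
  · rw [le_antisymm h hs, zero_mul]
  · rw [zero_mul]

lemma greenFn_one_left {s : ℝ} (hs : s ≤ 1) : greenFn 1 s = 0 := by
  rw [greenFn, if_pos hs, sub_self, mul_zero]

lemma sum_fin_pred_eq_sum_range {M : Type*} [AddCommMonoid M] (n : ℕ) {F : ℕ → M}
    (h0 : F 0 = 0) (hn : F n = 0) :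
    ∑ k : Fin (n - 1), F ((k : ℕ) + 1) = ∑ m ∈ range (n + 1), F m := by
  rcases n with _ | n
  · simp [h0]
  · rw [Fin.sum_univ_eq_sum_range (fun k => F (k + 1)), sum_range_succ, sum_range_succ', hn, h0]
    simp

lemma sum_stiff_mul {n : ℕ} (x : ℕ → ℝ) {g : ℕ → ℝ} (hg0 : g 0 = 0) (hgn : g n = 0)
    (j : Fin (n - 1)) :
    ∑ k : Fin (n - 1), stiff n x j k * g ((k : ℕ) + 1) =
      -(1 / (x ((j : ℕ) + 1) - x j)) * g j
        + (1 / (x ((j : ℕ) + 1) - x j) + 1 / (x ((j : ℕ) + 2) - x ((j : ℕ) + 1))) * g (j + 1)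
        - 1 / (x ((j : ℕ) + 2) - x ((j : ℕ) + 1)) * g (j + 2) := by
  set coeff : ℕ → ℝ := fun m =>
    (if m = j then -(1 / (x ((j : ℕ) + 1) - x j)) else 0)
      + (if m = j + 1 then
          1 / (x ((j : ℕ) + 1) - x j) + 1 / (x ((j : ℕ) + 2) - x ((j : ℕ) + 1)) else 0)
      + (if m = j + 2 then -(1 / (x ((j : ℕ) + 2) - x ((j : ℕ) + 1))) else 0) with hcoeff
  have hentry : ∀ k : Fin (n - 1), stiff n x j k = coeff ((k : ℕ) + 1) := by
    intro k
    simp only [stiff, hcoeff]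
    split_ifs <;> first | omega | ring
  have hj := j.isLt
  calc ∑ k : Fin (n - 1), stiff n x j k * g ((k : ℕ) + 1)
      = ∑ k : Fin (n - 1), coeff ((k : ℕ) + 1) * g ((k : ℕ) + 1) := by simp_rw [hentry]
    _ = ∑ m ∈ range (n + 1), coeff m * g m :=
        sum_fin_pred_eq_sum_range n (F := fun m => coeff m * g m) (by rw [hg0, mul_zero])
          (by rw [hgn, mul_zero])
    _ = _ := by
        simp only [hcoeff, add_mul, ite_mul, zero_mul, sum_add_distrib, sum_ite_eq', mem_range]
        rw [if_pos (by omega), if_pos (by omega), if_pos (by omega)]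
        ring

noncomputable def greenMat (n : ℕ) (x : ℕ → ℝ) : Matrix (Fin (n - 1)) (Fin (n - 1)) ℝ :=
  Matrix.of fun j i => greenFn (x ((j : ℕ) + 1)) (x ((i : ℕ) + 1))

lemma stiff_mul_greenMat {n : ℕ} {x : ℕ → ℝ} (hx0 : x 0 = 0) (hxn : x n = 1)
    (hx : StrictMonoOn x (Set.Iic n)) : stiff n x * greenMat n x = 1 := by
  have hxlt : ∀ {p q : ℕ}, p < q → q ≤ n → x p < x q := fun hpq hq =>
    hx (Set.mem_Iic.mpr (hpq.le.trans hq)) (Set.mem_Iic.mpr hq) hpq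
  have hxle : ∀ {p q : ℕ}, p ≤ q → q ≤ n → x p ≤ x q := fun hpq hq =>
    hx.monotoneOn (Set.mem_Iic.mpr (hpq.trans hq)) (Set.mem_Iic.mpr hq) hpq
  ext j i
  have hj := j.isLt
  have hi := i.isLt
  set s := x ((i : ℕ) + 1) with hs
  have hs0 : 0 ≤ s := hx0 ▸ hxle (Nat.zero_le _) (by omega)
  have hs1 : s ≤ 1 := hxn ▸ hxle (by omega) le_rfl
  rw [mul_apply, one_apply]
  simp only [greenMat, of_apply]
  rw [sum_stiff_mul x (g := fun m => greenFn (x m) s) (by rw [hx0, greenFn_zero_left hs0])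
    (by rw [hxn, greenFn_one_left hs1])]
  have hpos : s ≤ x j ∨ s = x ((j : ℕ) + 1) ∨ x ((j : ℕ) + 2) ≤ s := by
    rcases lt_trichotomy (i : ℕ) j with h | h | h
    · exact Or.inl (hxle (by omega) (by omega))
    · exact Or.inr (Or.inl (by rw [hs, h]))
    · exact Or.inr (Or.inr (hxle (by omega) (by omega)))
  rw [greenFn_secondDiff (hxlt (by omega) (by omega)) (hxlt (by omega) (by omega)) hpos]
  have hnode : s = x ((j : ℕ) + 1) ↔ j = i := by
    rw [hs, hx.injOn.eq_iff (Set.mem_Iic.mpr (by omega)) (Set.mem_Iic.mpr (by omega)), eq_comm,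
      Nat.add_right_cancel_iff, Fin.val_inj]
  simp only [hnode]

theorem stmt4_general
    (n : ℕ)
    (x : ℕ → ℝ) (hx0 : x 0 = 0) (hxn : x n = 1)
    (hmono : ∀ i, i < n → x i < x (i + 1))
    (f : ℝ → ℝ)
    (w : Fin (n - 1) → ℝ)
    (hw : ∀ j : Fin (n - 1),
      w j = ∑ i : Fin (n - 1),
        greenFn (x ((j : ℕ) + 1)) (x ((i : ℕ) + 1)) *
          ((x ((i : ℕ) + 2) - x (i : ℕ)) / 2) * f (x ((i : ℕ) + 1))) :
    (stiff n x).mulVec w =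
      (weightMat n x).mulVec (fun j : Fin (n - 1) => f (x ((j : ℕ) + 1))) := by
  have hw_green : w = greenMat n x *ᵥ (weightMat n x *ᵥ fun j => f (x ((j : ℕ) + 1))) := by
    funext j
    rw [mulVec, dotProduct]
    simp only [hw j, weightMat, mulVec_diagonal, greenMat, of_apply, mul_assoc]
  rw [hw_green, mulVec_mulVec, stiff_mul_greenMat hx0 hxn (strictMonoOn_Iic_of_lt_succ hmono),
    one_mulVec]

theorem stmt4
    (n : ℕ) (hn : 2 ≤ n)
    (x : ℕ → ℝ) (hx0 : x 0 = 0) (hxn : x n = 1)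
    (hmono : ∀ i, i < n → x i < x (i + 1))
    (f : ℝ → ℝ) (hf : ContinuousOn f (Set.Icc (0:ℝ) 1))
    (w : Fin (n - 1) → ℝ)
    (hw : ∀ j : Fin (n - 1),
      w j = ∑ i : Fin (n - 1),
        greenFn (x ((j : ℕ) + 1)) (x ((i : ℕ) + 1)) *
          ((x ((i : ℕ) + 2) - x (i : ℕ)) / 2) * f (x ((i : ℕ) + 1))) :
    (stiff n x).mulVec w =
      (weightMat n x).mulVec (fun j : Fin (n - 1) => f (x ((j : ℕ) + 1))) :=
  stmt4_general n x hx0 hxn hmono f w hw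
end

section
/- There exists a constant C > 0, independent of the nodes and of f, such that the following holds: for every f ∈ C²([0,1]), if u ∈ C²([0,1]) satisfies −u''(x) = f(x) on (0,1) with u(0) = u(1) = 0, and if w = S⁻¹(W f̃) is the finite difference solution (with f̃_j = f(x_j)), and v_h : [0,1] → ℝ is the piecewise linear function with v_h(x_i) = w_i for 1 ≤ i ≤ n−1 and v_h(x_0) = v_h(x_n) = 0, then ( ∫₀¹ (u′(x) − v_h′(x))² dx )^{1/2} ≤ C·h·( ‖f″‖_∞ + ‖f‖_{L²(0,1)} ), where h = max_{1 ≤ i ≤ n} h_i. -/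
/-!
Write `e = u_I - v_h`, where `u_I` is the piecewise linear interpolant of `u`, and `e'_i` for its
slope on the `i`-th element. On each element `u' - u_I'` has mean zero, so
`∫ (u' - v_h')² = ∫ (u' - u_I')² + ∑ h_i (e'_i)²`, and the first term is `O(h² ‖u''‖²_∞)`.
For the second, summation by parts against the nodal values of `e`, which vanish at `0` and `1`,
gives `∑ h_i (e'_i)² = ∑_j e(x_j) (e'_j - e'_{j+1})`, while Cauchy–Schwarz gives
`e(x_j)² ≤ ∑ h_i (e'_i)²`. Testing `-u'' = f` against the hat function at `x_j` shows that the jump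
`e'_j - e'_{j+1}` is the error of the lumped quadrature `∫ f φ_j ≈ (h_j + h_{j+1}) f(x_j) / 2`,
which is `O(h ‖f'‖_∞ (h_j + h_{j+1}))`; hence `∑ h_i (e'_i)² = O(h² ‖f'‖²_∞)`.
Finally `‖f‖_∞` and `‖f'‖_∞` are `O(‖f''‖_∞ + ‖f‖_{L²})`: somewhere in `[0, 1/3]` and somewhere in
`[2/3, 1]` we have `|f| ≤ 2 ‖f‖_{L²}`, the mean value theorem bounds `f'` at a point in between,
and integrating `f''`, then `f'`, spreads the bounds over `[0, 1]`.
-/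

open MeasureTheory

/-- Extension by zero: an interior-node vector `(v_1, …, v_{n-1})` extended to all node
indices `0, 1, …, n` with `v_0 = v_n = 0`. -/
def extendVec (n : ℕ) (v : Fin (n - 1) → ℝ) : ℕ → ℝ := fun p =>
  if hp : 1 ≤ p ∧ p - 1 < n - 1 then v ⟨p - 1, hp.2⟩ else 0

open Set

section Interval

variable {a b : ℝ}

theorem abs_sub_le_of_abs_hasDerivWithinAt_le {g g' : ℝ → ℝ} {C : ℝ}
    (hg : ∀ t ∈ Icc a b, HasDerivWithinAt g (g' t) (Icc a b) t)
    (hC : ∀ t ∈ Icc a b, |g' t| ≤ C) {s t : ℝ} (hs : s ∈ Icc a b) (ht : t ∈ Icc a b) :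
    |g t - g s| ≤ C * |t - s| := by
  simpa only [Real.norm_eq_abs] using
    (convex_Icc a b).norm_image_sub_le_of_norm_hasDerivWithin_le hg
      (by simpa only [Real.norm_eq_abs] using hC) hs ht

theorem integral_eq_sub_of_hasDerivWithinAt_Icc {g g' : ℝ → ℝ} (hab : a ≤ b)
    (hg : ∀ t ∈ Icc a b, HasDerivWithinAt g (g' t) (Icc a b) t)
    (hg' : ContinuousOn g' (Icc a b)) :
    ∫ t in a..b, g' t = g b - g a :=
  intervalIntegral.integral_eq_sub_of_hasDeriv_right_of_le hab
    (fun t ht => (hg t ht).continuousWithinAt)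
    (fun t ht => ((hg t (Ioo_subset_Icc_self ht)).hasDerivAt
      (Icc_mem_nhds ht.1 ht.2)).hasDerivWithinAt)
    (hg'.intervalIntegrable_of_Icc hab)

theorem integral_sq_sub_const_eq {g : ℝ → ℝ} {m : ℝ} (hg : ContinuousOn g (uIcc a b))
    (hm : ∫ t in a..b, g t = (b - a) * m) (s : ℝ) :
    ∫ t in a..b, (g t - s) ^ 2 = (∫ t in a..b, (g t - m) ^ 2) + (b - a) * (m - s) ^ 2 := by
  have hgm : IntervalIntegrable (fun t => g t - m) volume a b :=
    (hg.sub continuousOn_const).intervalIntegrable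
  have hgm2 : IntervalIntegrable (fun t => (g t - m) ^ 2) volume a b :=
    ((hg.sub continuousOn_const).pow 2).intervalIntegrable
  have hmean : ∫ t in a..b, (g t - m) = 0 := by
    rw [intervalIntegral.integral_sub hg.intervalIntegrable intervalIntegrable_const, hm,
      intervalIntegral.integral_const, smul_eq_mul, sub_self]
  have hsplit : ∀ t, (g t - s) ^ 2 = (g t - m) ^ 2 + (2 * (m - s) * (g t - m) + (m - s) ^ 2) :=
    fun t => by ring
  simp_rw [hsplit]
  rw [intervalIntegral.integral_add hgm2 ((hgm.const_mul _).add intervalIntegrable_const),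
    intervalIntegral.integral_add (hgm.const_mul _) intervalIntegrable_const,
    intervalIntegral.integral_const_mul, hmean, intervalIntegral.integral_const, smul_eq_mul]
  ring

theorem integral_sq_deriv_sub_slope_le {u u' u'' : ℝ → ℝ} {K : ℝ} (hab : a < b)
    (hu : ∀ t ∈ Icc a b, HasDerivWithinAt u (u' t) (Icc a b) t)
    (hu' : ∀ t ∈ Icc a b, HasDerivWithinAt u' (u'' t) (Icc a b) t)
    (hK : ∀ t ∈ Icc a b, |u'' t| ≤ K) :
    ∫ t in a..b, (u' t - (u b - u a) / (b - a)) ^ 2 ≤ K ^ 2 * (b - a) ^ 3 := by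
  obtain ⟨ξ, hξ, hslope⟩ := exists_hasDerivAt_eq_slope u u' hab
    (fun t ht => (hu t ht).continuousWithinAt)
    (fun t ht => (hu t (Ioo_subset_Icc_self ht)).hasDerivAt (Icc_mem_nhds ht.1 ht.2))
  have hK0 : 0 ≤ K := (abs_nonneg _).trans (hK a (left_mem_Icc.2 hab.le))
  have hpt : ∀ t ∈ uIoc a b, ‖(u' t - (u b - u a) / (b - a)) ^ 2‖ ≤ (K * (b - a)) ^ 2 := by
    intro t ht
    have ht' : t ∈ Icc a b := Ioc_subset_Icc_self (uIoc_of_le hab.le ▸ ht)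
    have hξ' := Ioo_subset_Icc_self hξ
    rw [Real.norm_eq_abs, abs_pow, ← hslope]
    refine pow_le_pow_left₀ (abs_nonneg _) ?_ 2
    calc |u' t - u' ξ| ≤ K * |t - ξ| := abs_sub_le_of_abs_hasDerivWithinAt_le hu' hK hξ' ht'
      _ ≤ K * (b - a) := mul_le_mul_of_nonneg_left
        (by simpa only [Real.dist_eq] using Real.dist_le_of_mem_Icc ht' hξ') hK0
  calc ∫ t in a..b, (u' t - (u b - u a) / (b - a)) ^ 2
      ≤ ‖∫ t in a..b, (u' t - (u b - u a) / (b - a)) ^ 2‖ := Real.le_norm_self _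
    _ ≤ (K * (b - a)) ^ 2 * |b - a| := intervalIntegral.norm_integral_le_of_norm_le_const hpt
    _ = K ^ 2 * (b - a) ^ 3 := by rw [abs_of_pos (sub_pos.2 hab)]; ring

theorem integral_sq_deriv_sub_le {u u' u'' : ℝ → ℝ} {K : ℝ} (hab : a < b)
    (hu : ∀ t ∈ Icc a b, HasDerivWithinAt u (u' t) (Icc a b) t)
    (hu' : ∀ t ∈ Icc a b, HasDerivWithinAt u' (u'' t) (Icc a b) t)
    (hK : ∀ t ∈ Icc a b, |u'' t| ≤ K) (s : ℝ) :
    ∫ t in a..b, (u' t - s) ^ 2 ≤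
      K ^ 2 * (b - a) ^ 3 + (b - a) * ((u b - u a) / (b - a) - s) ^ 2 := by
  have hu'c : ContinuousOn u' (Icc a b) := fun t ht => (hu' t ht).continuousWithinAt
  have hmean : ∫ t in a..b, u' t = (b - a) * ((u b - u a) / (b - a)) := by
    rw [integral_eq_sub_of_hasDerivWithinAt_Icc hab.le hu hu'c,
      mul_div_cancel₀ _ (sub_pos.2 hab).ne']
  rw [integral_sq_sub_const_eq (uIcc_of_le hab.le ▸ hu'c) hmean s]
  gcongr
  exact integral_sq_deriv_sub_slope_le hab hu hu' hK

theorem integral_mul_sub_left_div_eq {u u' u'' : ℝ → ℝ} (hab : a < b)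
    (hu : ∀ t ∈ Icc a b, HasDerivWithinAt u (u' t) (Icc a b) t)
    (hu' : ∀ t ∈ Icc a b, HasDerivWithinAt u' (u'' t) (Icc a b) t)
    (hu'' : ContinuousOn u'' (Icc a b)) :
    ∫ t in a..b, u'' t * ((t - a) / (b - a)) = u' b - (u b - u a) / (b - a) := by
  have hne : b - a ≠ 0 := (sub_pos.2 hab).ne'
  have hderiv : ∀ t ∈ Icc a b, HasDerivWithinAt (fun s => (u' s * (s - a) - u s) / (b - a))
      (u'' t * ((t - a) / (b - a))) (Icc a b) t := by
    intro t ht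
    rw [show u'' t * ((t - a) / (b - a)) = (u'' t * (t - a) + u' t * 1 - u' t) / (b - a) by ring]
    exact (((hu' t ht).mul ((hasDerivWithinAt_id t _).sub_const a)).sub (hu t ht)).div_const _
  rw [integral_eq_sub_of_hasDerivWithinAt_Icc hab.le hderiv
    (hu''.mul (by fun_prop : Continuous fun t : ℝ => (t - a) / (b - a)).continuousOn)]
  field_simp
  ring

theorem integral_mul_sub_right_div_eq {u u' u'' : ℝ → ℝ} (hab : a < b)
    (hu : ∀ t ∈ Icc a b, HasDerivWithinAt u (u' t) (Icc a b) t)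
    (hu' : ∀ t ∈ Icc a b, HasDerivWithinAt u' (u'' t) (Icc a b) t)
    (hu'' : ContinuousOn u'' (Icc a b)) :
    ∫ t in a..b, u'' t * ((b - t) / (b - a)) = (u b - u a) / (b - a) - u' a := by
  have hne : b - a ≠ 0 := (sub_pos.2 hab).ne'
  have hderiv : ∀ t ∈ Icc a b, HasDerivWithinAt (fun s => (u' s * (b - s) + u s) / (b - a))
      (u'' t * ((b - t) / (b - a))) (Icc a b) t := by
    intro t ht
    rw [show u'' t * ((b - t) / (b - a)) = (u'' t * (b - t) + u' t * -1 + u' t) / (b - a) by ring]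
    exact (((hu' t ht).mul ((hasDerivWithinAt_id t _).const_sub b)).add (hu t ht)).div_const _
  rw [integral_eq_sub_of_hasDerivWithinAt_Icc hab.le hderiv
    (hu''.mul (by fun_prop : Continuous fun t : ℝ => (b - t) / (b - a)).continuousOn)]
  field_simp
  ring

theorem abs_sub_div_le_one {s t : ℝ} (hs : s ∈ Icc a b) (ht : t ∈ Icc a b) :
    |(t - s) / (b - a)| ≤ 1 := by
  have hab : 0 ≤ b - a := sub_nonneg.2 (hs.1.trans hs.2)
  rw [abs_div, abs_of_nonneg hab]
  exact div_le_one_of_le₀ (by simpa only [Real.dist_eq] using Real.dist_le_of_mem_Icc ht hs) hab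

theorem abs_integral_mul_sub_le {g φ : ℝ → ℝ} {c L : ℝ} (hab : a ≤ b)
    (hg : ContinuousOn g (Icc a b)) (hφ : ContinuousOn φ (Icc a b))
    (hφ1 : ∀ t ∈ Icc a b, |φ t| ≤ 1) (hφint : ∫ t in a..b, φ t = (b - a) / 2)
    (hL : ∀ t ∈ Icc a b, |g t - g c| ≤ L) :
    |(∫ t in a..b, g t * φ t) - (b - a) / 2 * g c| ≤ L * (b - a) := by
  have hφi : IntervalIntegrable φ volume a b := hφ.intervalIntegrable_of_Icc hab
  have hgφ : IntervalIntegrable (fun t => g t * φ t) volume a b :=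
    (hg.mul hφ).intervalIntegrable_of_Icc hab
  have hcentre : (∫ t in a..b, g t * φ t) - (b - a) / 2 * g c = ∫ t in a..b, (g t - g c) * φ t := by
    simp_rw [sub_mul]
    rw [intervalIntegral.integral_sub hgφ (hφi.const_mul _), intervalIntegral.integral_const_mul,
      hφint, mul_comm (g c)]
  have hpt : ∀ t ∈ uIoc a b, ‖(g t - g c) * φ t‖ ≤ L := by
    intro t ht
    have ht' : t ∈ Icc a b := Ioc_subset_Icc_self (uIoc_of_le hab ▸ ht)
    rw [Real.norm_eq_abs, abs_mul, ← mul_one L]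
    exact mul_le_mul (hL t ht') (hφ1 t ht') (abs_nonneg _) ((abs_nonneg _).trans (hL t ht'))
  rw [hcentre, ← Real.norm_eq_abs, ← abs_of_nonneg (sub_nonneg.2 hab)]
  exact intervalIntegral.norm_integral_le_of_norm_le_const hpt

theorem integral_sub_left_div (hab : a ≠ b) : ∫ t in a..b, (t - a) / (b - a) = (b - a) / 2 := by
  have hne : b - a ≠ 0 := sub_ne_zero.2 hab.symm
  rw [intervalIntegral.integral_div, intervalIntegral.integral_sub
    intervalIntegral.intervalIntegrable_id intervalIntegrable_const, integral_id,
    intervalIntegral.integral_const, smul_eq_mul]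
  field_simp
  ring

theorem integral_sub_right_div (hab : a ≠ b) : ∫ t in a..b, (b - t) / (b - a) = (b - a) / 2 := by
  have hne : b - a ≠ 0 := sub_ne_zero.2 hab.symm
  rw [intervalIntegral.integral_div, intervalIntegral.integral_sub
    intervalIntegrable_const intervalIntegral.intervalIntegrable_id, integral_id,
    intervalIntegral.integral_const, smul_eq_mul]
  field_simp
  ring

theorem exists_mul_sq_le_integral_sq {g : ℝ → ℝ} (hab : a < b)
    (hg : ContinuousOn g (Icc a b)) :
    ∃ c ∈ Icc a b, (b - a) * g c ^ 2 ≤ ∫ t in a..b, g t ^ 2 := by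
  obtain ⟨c, hc, hmin⟩ := isCompact_Icc.exists_isMinOn (nonempty_Icc.2 hab.le) (hg.pow 2)
  refine ⟨c, hc, ?_⟩
  calc (b - a) * g c ^ 2 = ∫ _ in a..b, g c ^ 2 := by
        rw [intervalIntegral.integral_const, smul_eq_mul]
    _ ≤ ∫ t in a..b, g t ^ 2 := intervalIntegral.integral_mono_on hab.le intervalIntegrable_const
        ((hg.pow 2).intervalIntegrable_of_Icc hab.le) fun t ht => hmin ht

end Interval

theorem forall_hasDerivWithinAt_mono {g g' : ℝ → ℝ} {s t : Set ℝ}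
    (hg : ∀ y ∈ s, HasDerivWithinAt g (g' y) s y) (hts : t ⊆ s) :
    ∀ y ∈ t, HasDerivWithinAt g (g' y) t y :=
  fun y hy => (hg y (hts hy)).mono hts

theorem abs_slope_sub_slope_sub_le {u u' f f' : ℝ → ℝ} {a b c K : ℝ} (hab : a < b) (hbc : b < c)
    (hu : ∀ t ∈ Icc a c, HasDerivWithinAt u (u' t) (Icc a c) t)
    (hu' : ∀ t ∈ Icc a c, HasDerivWithinAt u' (-f t) (Icc a c) t)
    (hf : ∀ t ∈ Icc a c, HasDerivWithinAt f (f' t) (Icc a c) t)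
    (hK : ∀ t ∈ Icc a c, |f' t| ≤ K) :
    |(u b - u a) / (b - a) - (u c - u b) / (c - b) - (c - a) / 2 * f b| ≤
      K * max (b - a) (c - b) * (c - a) := by
  have hb : b ∈ Icc a c := ⟨hab.le, hbc.le⟩
  have hfc : ContinuousOn f (Icc a c) := fun t ht => (hf t ht).continuousWithinAt
  set L := K * max (b - a) (c - b)
  have hL : ∀ t ∈ Icc a c, |f t - f b| ≤ L := by
    intro t ht
    have hdist : |t - b| ≤ max (b - a) (c - b) := abs_sub_le_iff.2
      ⟨(by linarith [ht.2] : t - b ≤ c - b).trans (le_max_right _ _),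
        (by linarith [ht.1] : b - t ≤ b - a).trans (le_max_left _ _)⟩
    exact (abs_sub_le_of_abs_hasDerivWithinAt_le hf hK hb ht).trans
      (mul_le_mul_of_nonneg_left hdist ((abs_nonneg _).trans (hK b hb)))
  have hsubL : Icc a b ⊆ Icc a c := Icc_subset_Icc_right hbc.le
  have hsubR : Icc b c ⊆ Icc a c := Icc_subset_Icc_left hab.le
  have hIL := integral_mul_sub_left_div_eq hab (forall_hasDerivWithinAt_mono hu hsubL)
    (forall_hasDerivWithinAt_mono hu' hsubL) (hfc.neg.mono hsubL)
  have hIR := integral_mul_sub_right_div_eq hbc (forall_hasDerivWithinAt_mono hu hsubR)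
    (forall_hasDerivWithinAt_mono hu' hsubR) (hfc.neg.mono hsubR)
  simp only [neg_mul, intervalIntegral.integral_neg] at hIL hIR
  have hQL := abs_integral_mul_sub_le hab.le (hfc.mono hsubL)
    (by fun_prop : Continuous fun t => (t - a) / (b - a)).continuousOn
    (fun t ht => abs_sub_div_le_one (left_mem_Icc.2 hab.le) ht)
    (integral_sub_left_div hab.ne) (fun t ht => hL t (hsubL ht))
  have hQR := abs_integral_mul_sub_le hbc.le (hfc.mono hsubR)
    (by fun_prop : Continuous fun t => (c - t) / (c - b)).continuousOn
    (fun t ht => abs_sub_div_le_one ht (right_mem_Icc.2 hbc.le))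
    (integral_sub_right_div hbc.ne) (fun t ht => hL t (hsubR ht))
  calc |(u b - u a) / (b - a) - (u c - u b) / (c - b) - (c - a) / 2 * f b|
      = |((∫ t in a..b, f t * ((t - a) / (b - a))) - (b - a) / 2 * f b) +
          ((∫ t in b..c, f t * ((c - t) / (c - b))) - (c - b) / 2 * f b)| := by
        congr 1
        linear_combination hIL + hIR
    _ ≤ L * (b - a) + L * (c - b) := (abs_add_le _ _).trans (add_le_add hQL hQR)
    _ = L * (c - a) := by ring

section Landau

variable {f f' f'' : ℝ → ℝ} {N M : ℝ}

theorem exists_abs_le_two_mul_of_integral_sq_le {a : ℝ} (ha : 0 ≤ a) (ha' : a + 1 / 3 ≤ 1)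
    (hf : ContinuousOn f (Icc 0 1)) (hN0 : 0 ≤ N) (hN : ∫ t in (0:ℝ)..1, f t ^ 2 ≤ N ^ 2) :
    ∃ c ∈ Icc a (a + 1 / 3), |f c| ≤ 2 * N := by
  obtain ⟨c, hc, hcsq⟩ :=
    exists_mul_sq_le_integral_sq (by norm_num) (hf.mono (Icc_subset_Icc ha ha'))
  have hmono : ∫ t in a..a + 1 / 3, f t ^ 2 ≤ ∫ t in (0:ℝ)..1, f t ^ 2 :=
    intervalIntegral.integral_mono_interval ha (by linarith) ha'
      (Filter.Eventually.of_forall fun t => sq_nonneg _)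
      ((hf.pow 2).intervalIntegrable_of_Icc zero_le_one)
  exact ⟨c, hc, abs_le_of_sq_le_sq (by nlinarith [sq_nonneg (f c)]) (by positivity)⟩

theorem abs_le_and_abs_deriv_le_of_integral_sq_le
    (hf : ∀ t ∈ Icc (0:ℝ) 1, HasDerivWithinAt f (f' t) (Icc 0 1) t)
    (hf' : ∀ t ∈ Icc (0:ℝ) 1, HasDerivWithinAt f' (f'' t) (Icc 0 1) t)
    (hM : ∀ t ∈ Icc (0:ℝ) 1, |f'' t| ≤ M) (hN0 : 0 ≤ N)
    (hN : ∫ t in (0:ℝ)..1, f t ^ 2 ≤ N ^ 2) :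
    ∀ t ∈ Icc (0:ℝ) 1, |f t| ≤ 14 * N + M ∧ |f' t| ≤ 14 * N + M := by
  have hfc : ContinuousOn f (Icc 0 1) := fun t ht => (hf t ht).continuousWithinAt
  have hM0 : 0 ≤ M := (abs_nonneg _).trans (hM 0 (left_mem_Icc.2 zero_le_one))
  obtain ⟨c₁, hc₁, hfc₁⟩ := exists_abs_le_two_mul_of_integral_sq_le le_rfl (by norm_num) hfc hN0 hN
  obtain ⟨c₂, hc₂, hfc₂⟩ :=
    exists_abs_le_two_mul_of_integral_sq_le (a := 2 / 3) (by norm_num) (by norm_num) hfc hN0 hN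
  have hc₁' : c₁ ∈ Icc (0:ℝ) 1 := ⟨hc₁.1, by linarith [hc₁.2]⟩
  have hsep : 1 / 3 ≤ c₂ - c₁ := by linarith [hc₁.2, hc₂.1]
  obtain ⟨ξ, hξ, hslope⟩ := exists_hasDerivAt_eq_slope f f' (a := c₁) (b := c₂) (by linarith)
    (hfc.mono (Icc_subset_Icc hc₁.1 (by linarith [hc₂.2])))
    fun s hs => (hf s ⟨by linarith [hc₁.1, hs.1], by linarith [hc₂.2, hs.2]⟩).hasDerivAt
      (Icc_mem_nhds (by linarith [hc₁.1, hs.1]) (by linarith [hc₂.2, hs.2]))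
  have hξ' : ξ ∈ Icc (0:ℝ) 1 := ⟨by linarith [hc₁.1, hξ.1], by linarith [hc₂.2, hξ.2]⟩
  have hf'ξ : |f' ξ| ≤ 12 * N := by
    have hpos : 0 < c₂ - c₁ := by linarith
    rw [hslope, abs_div, abs_of_pos hpos, div_le_iff₀ hpos]
    nlinarith [abs_sub (f c₂) (f c₁)]
  have hf'bd : ∀ s ∈ Icc (0:ℝ) 1, |f' s| ≤ 12 * N + M := by
    intro s hs
    have hvar : |f' s - f' ξ| ≤ M * |s - ξ| := abs_sub_le_of_abs_hasDerivWithinAt_le hf' hM hξ' hs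
    have hdist : |s - ξ| ≤ 1 := by
      simpa only [Real.dist_eq] using Real.dist_le_of_mem_Icc_01 hs hξ'
    have := mul_le_mul_of_nonneg_left hdist hM0
    linarith [abs_sub_abs_le_abs_sub (f' s) (f' ξ)]
  intro t ht
  have hvar : |f t - f c₁| ≤ (12 * N + M) * |t - c₁| :=
    abs_sub_le_of_abs_hasDerivWithinAt_le hf hf'bd hc₁' ht
  have hdist : |t - c₁| ≤ 1 := by
    simpa only [Real.dist_eq] using Real.dist_le_of_mem_Icc_01 ht hc₁'
  have := mul_le_mul_of_nonneg_left hdist (by positivity : 0 ≤ 12 * N + M)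
  exact ⟨by linarith [abs_sub_abs_le_abs_sub (f t) (f c₁)], by linarith [hf'bd t ht]⟩

end Landau

/-- The slope on `[x i, x (i + 1)]` of the piecewise linear interpolant of the nodal values `v`. -/
noncomputable def nodalSlope (x v : ℕ → ℝ) (i : ℕ) : ℝ := (v (i + 1) - v i) / (x (i + 1) - x i)

theorem nodalSlope_sub (x v w : ℕ → ℝ) (i : ℕ) :
    nodalSlope x (fun j => v j - w j) i = nodalSlope x v i - nodalSlope x w i := by
  simp only [nodalSlope]
  ring

section Discrete

variable {n : ℕ} {x E : ℕ → ℝ}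

theorem monotoneOn_Iic_of_lt_succ (hx : ∀ i < n, x i < x (i + 1)) : MonotoneOn x (Iic n) :=
  (strictMonoOn_Iic_of_lt_succ hx).monotoneOn

theorem mul_nodalSlope (hx : ∀ i < n, x i < x (i + 1)) {i : ℕ} (hi : i < n) :
    (x (i + 1) - x i) * nodalSlope x E i = E (i + 1) - E i :=
  mul_div_cancel₀ _ (sub_pos.2 (hx i hi)).ne'

theorem sum_mul_nodalSlope_sq_eq (hx : ∀ i < n, x i < x (i + 1)) (hE0 : E 0 = 0)
    (hEn : E n = 0) :
    ∑ i ∈ Finset.range n, (x (i + 1) - x i) * nodalSlope x E i ^ 2 =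
      ∑ j ∈ Finset.range (n - 1), E (j + 1) * (nodalSlope x E j - nodalSlope x E (j + 1)) := by
  have hterm : ∀ i ∈ Finset.range n, (x (i + 1) - x i) * nodalSlope x E i ^ 2 =
      nodalSlope x E i • (E (i + 1) - E i) := fun i hi => by
    rw [← mul_nodalSlope (E := E) hx (Finset.mem_range.1 hi), smul_eq_mul]
    ring
  rw [Finset.sum_congr rfl hterm, Finset.sum_range_by_parts]
  simp only [Finset.sum_range_sub E, hE0, hEn, sub_zero, smul_eq_mul]
  rw [mul_zero, zero_sub, ← Finset.sum_neg_distrib]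
  exact Finset.sum_congr rfl fun j _ => by ring

theorem sq_le_mul_sum_mul_nodalSlope_sq (hx : ∀ i < n, x i < x (i + 1)) (hE0 : E 0 = 0)
    {p : ℕ} (hp : p ≤ n) :
    E p ^ 2 ≤ (x n - x 0) * ∑ i ∈ Finset.range n, (x (i + 1) - x i) * nodalSlope x E i ^ 2 := by
  have hmono := monotoneOn_Iic_of_lt_succ hx
  have hh : ∀ i ∈ Finset.range n, 0 ≤ x (i + 1) - x i :=
    fun i hi => (sub_pos.2 (hx i (Finset.mem_range.1 hi))).le
  have hsub : Finset.range p ⊆ Finset.range n := Finset.range_subset_range.2 hp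
  have hEp : E p = ∑ i ∈ Finset.range p, (x (i + 1) - x i) * nodalSlope x E i := by
    rw [Finset.sum_congr rfl fun i hi => mul_nodalSlope hx ((Finset.mem_range.1 hi).trans_le hp),
      Finset.sum_range_sub, hE0, sub_zero]
  have hcs := Finset.sum_sq_le_sum_mul_sum_of_sq_le_mul (Finset.range p)
    (r := fun i => (x (i + 1) - x i) * nodalSlope x E i)
    (f := fun i => x (i + 1) - x i) (g := fun i => (x (i + 1) - x i) * nodalSlope x E i ^ 2)
    (fun i hi => hh i (hsub hi)) (fun i hi => mul_nonneg (hh i (hsub hi)) (sq_nonneg _))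
    (fun i _ => le_of_eq (by ring))
  rw [Finset.sum_range_sub] at hcs
  rw [hEp]
  refine hcs.trans (mul_le_mul ?_ ?_ (Finset.sum_nonneg fun i hi =>
    mul_nonneg (hh i (hsub hi)) (sq_nonneg _)) (sub_nonneg.2 ?_))
  · exact sub_le_sub_right (hmono (mem_Iic.2 hp) (mem_Iic.2 le_rfl) hp) _
  · exact Finset.sum_le_sum_of_subset_of_nonneg hsub fun i hi _ =>
      mul_nonneg (hh i hi) (sq_nonneg _)
  · exact hmono (mem_Iic.2 (Nat.zero_le n)) (mem_Iic.2 le_rfl) (Nat.zero_le n)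

theorem sum_mul_nodalSlope_sq_le (hx : ∀ i < n, x i < x (i + 1)) (hE0 : E 0 = 0)
    (hEn : E n = 0) :
    ∑ i ∈ Finset.range n, (x (i + 1) - x i) * nodalSlope x E i ^ 2 ≤
      (x n - x 0) *
        (∑ j ∈ Finset.range (n - 1), |nodalSlope x E j - nodalSlope x E (j + 1)|) ^ 2 := by
  set B := ∑ i ∈ Finset.range n, (x (i + 1) - x i) * nodalSlope x E i ^ 2
  set R := ∑ j ∈ Finset.range (n - 1), |nodalSlope x E j - nodalSlope x E (j + 1)|
  have hL : 0 ≤ x n - x 0 := sub_nonneg.2 <| monotoneOn_Iic_of_lt_succ hx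
    (mem_Iic.2 (Nat.zero_le n)) (mem_Iic.2 le_rfl) (Nat.zero_le n)
  have hB0 : 0 ≤ B := Finset.sum_nonneg fun i hi =>
    mul_nonneg (sub_pos.2 (hx i (Finset.mem_range.1 hi))).le (sq_nonneg _)
  have hR0 : 0 ≤ R := Finset.sum_nonneg fun j _ => abs_nonneg _
  have hBR : B ≤ √((x n - x 0) * B) * R := by
    calc B = ∑ j ∈ Finset.range (n - 1),
          E (j + 1) * (nodalSlope x E j - nodalSlope x E (j + 1)) :=
          sum_mul_nodalSlope_sq_eq hx hE0 hEn
      _ ≤ ∑ j ∈ Finset.range (n - 1),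
          √((x n - x 0) * B) * |nodalSlope x E j - nodalSlope x E (j + 1)| := by
          refine Finset.sum_le_sum fun j hj => ?_
          have hE : |E (j + 1)| ≤ √((x n - x 0) * B) := Real.abs_le_sqrt
            (sq_le_mul_sum_mul_nodalSlope_sq hx hE0 (by have := Finset.mem_range.1 hj; omega))
          calc E (j + 1) * (nodalSlope x E j - nodalSlope x E (j + 1))
              ≤ |E (j + 1)| * |nodalSlope x E j - nodalSlope x E (j + 1)| :=
                (le_abs_self _).trans (abs_mul _ _).le
            _ ≤ _ := mul_le_mul_of_nonneg_right hE (abs_nonneg _)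
      _ = √((x n - x 0) * B) * R := (Finset.mul_sum _ _ _).symm
  have hsq : B ^ 2 ≤ (x n - x 0) * B * R ^ 2 := by
    calc B ^ 2 ≤ (√((x n - x 0) * B) * R) ^ 2 := pow_le_pow_left₀ hB0 hBR 2
      _ = (x n - x 0) * B * R ^ 2 := by rw [mul_pow, Real.sq_sqrt (mul_nonneg hL hB0)]
  nlinarith [mul_nonneg hL (sq_nonneg R)]

theorem sum_range_sub_two_le (hx : ∀ i < n, x i < x (i + 1)) :
    ∑ j ∈ Finset.range (n - 1), (x (j + 2) - x j) ≤ 2 * (x n - x 0) := by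
  rcases n with _ | m
  · simp
  have hsplit : ∀ j, x (j + 2) - x j = (x (j + 1 + 1) - x (j + 1)) + (x (j + 1) - x j) :=
    fun j => by ring
  simp only [Nat.add_sub_cancel, hsplit, Finset.sum_add_distrib,
    Finset.sum_range_sub (fun j => x (j + 1)), Finset.sum_range_sub x]
  linarith [hx 0 (Nat.succ_pos m), hx m (Nat.lt_succ_self m)]

end Discrete

section StiffnessMatrix

variable {n : ℕ}

theorem extendVec_zero (w : Fin (n - 1) → ℝ) : extendVec n w 0 = 0 := by
  simp [extendVec]

theorem extendVec_of_le (w : Fin (n - 1) → ℝ) {p : ℕ} (hp : n ≤ p) : extendVec n w p = 0 :=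
  dif_neg fun h => by omega

theorem extendVec_succ (w : Fin (n - 1) → ℝ) (k : Fin (n - 1)) : extendVec n w (k + 1) = w k :=
  dif_pos ⟨Nat.le_add_left 1 k, by simp⟩

theorem stiff_mulVec_apply (x : ℕ → ℝ) (w : Fin (n - 1) → ℝ) (j : Fin (n - 1)) :
    (stiff n x).mulVec w j =
      nodalSlope x (extendVec n w) j - nodalSlope x (extendVec n w) (j + 1) := by
  obtain ⟨j, hj⟩ := j
  set W := extendVec n w
  let G : ℕ → ℝ := fun k =>
    (if k = j then (1 / (x (j + 1) - x j) + 1 / (x (j + 2) - x (j + 1))) * W (k + 1) else 0) -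
      (if k = j + 1 then W (k + 1) / (x (j + 2) - x (j + 1)) else 0) -
      (if k + 1 = j then W (k + 1) / (x (j + 1) - x j) else 0)
  have hrow : ∀ k : Fin (n - 1), stiff n x ⟨j, hj⟩ k * w k = G k := by
    intro k
    rw [← extendVec_succ w k]
    simp only [stiff, G]
    split_ifs <;> first | omega | (subst_vars; ring)
  rw [Matrix.mulVec, dotProduct, Finset.sum_congr rfl fun k _ => hrow k,
    Fin.sum_univ_eq_sum_range G]
  have hnext : (if j + 1 < n - 1 then W (j + 1 + 1) / (x (j + 2) - x (j + 1)) else 0) =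
      W (j + 2) / (x (j + 2) - x (j + 1)) := by
    split_ifs with h
    · rfl
    · rw [show W (j + 2) = 0 from extendVec_of_le w (by omega), zero_div]
  have hprev : ∑ k ∈ Finset.range (n - 1), (if k + 1 = j then W (k + 1) / (x (j + 1) - x j) else 0)
      = W j / (x (j + 1) - x j) := by
    rcases j with _ | m
    · simp [W, extendVec_zero]
    · simp only [Nat.add_right_cancel_iff, Finset.sum_ite_eq', Finset.mem_range,
        if_pos (by omega : m < n - 1)]
  simp only [G, Finset.sum_sub_distrib, Finset.sum_ite_eq', Finset.mem_range, nodalSlope]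
  rw [if_pos hj, hnext, hprev]
  ring

theorem nodalSlope_sub_nodalSlope_of_stiff_mulVec_eq {x F : ℕ → ℝ}
    {w : Fin (n - 1) → ℝ}
    (hw : (stiff n x).mulVec w = (weightMat n x).mulVec fun j : Fin (n - 1) => F ((j : ℕ) + 1))
    {j : ℕ} (hj : j < n - 1) :
    nodalSlope x (extendVec n w) j - nodalSlope x (extendVec n w) (j + 1) =
      (x (j + 2) - x j) / 2 * F (j + 1) := by
  have hrow := congrFun hw ⟨j, hj⟩
  rwa [stiff_mulVec_apply, weightMat, Matrix.mulVec_diagonal] at hrow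

end StiffnessMatrix

section Mesh

variable {n : ℕ} {x : ℕ → ℝ} {u u' u'' f f' : ℝ → ℝ} {K H : ℝ}

theorem mem_Icc_zero_one_of_le (hx0 : x 0 = 0) (hxn : x n = 1) (hx : ∀ i < n, x i < x (i + 1))
    {i : ℕ} (hi : i ≤ n) : x i ∈ Icc (0:ℝ) 1 :=
  have hmono := monotoneOn_Iic_of_lt_succ hx
  ⟨hx0 ▸ hmono (mem_Iic.2 (Nat.zero_le n)) (mem_Iic.2 hi) (Nat.zero_le i),
    hxn ▸ hmono (mem_Iic.2 hi) (mem_Iic.2 le_rfl) hi⟩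

theorem integral_sq_deriv_sub_nodalSlope_le (hx0 : x 0 = 0) (hxn : x n = 1)
    (hx : ∀ i < n, x i < x (i + 1)) (hH : ∀ i < n, x (i + 1) - x i ≤ H)
    (hu : ∀ t ∈ Icc (0:ℝ) 1, HasDerivWithinAt u (u' t) (Icc 0 1) t)
    (hu' : ∀ t ∈ Icc (0:ℝ) 1, HasDerivWithinAt u' (u'' t) (Icc 0 1) t)
    (hK : ∀ t ∈ Icc (0:ℝ) 1, |u'' t| ≤ K) (W : ℕ → ℝ) {i : ℕ} (hi : i < n) :
    ∫ t in x i..x (i + 1), (u' t - nodalSlope x W i) ^ 2 ≤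
      (K * H) ^ 2 * (x (i + 1) - x i) +
        (x (i + 1) - x i) * nodalSlope x (fun j => u (x j) - W j) i ^ 2 := by
  have hsub : Icc (x i) (x (i + 1)) ⊆ Icc 0 1 := Icc_subset_Icc
    (mem_Icc_zero_one_of_le hx0 hxn hx hi.le).1 (mem_Icc_zero_one_of_le hx0 hxn hx hi).2
  have hK0 : 0 ≤ K := (abs_nonneg _).trans (hK 0 (left_mem_Icc.2 zero_le_one))
  have hh0 : 0 ≤ x (i + 1) - x i := (sub_pos.2 (hx i hi)).le
  have hKh : K ^ 2 * (x (i + 1) - x i) ^ 3 ≤ (K * H) ^ 2 * (x (i + 1) - x i) := by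
    have := pow_le_pow_left₀ (mul_nonneg hK0 hh0) (mul_le_mul_of_nonneg_left (hH i hi) hK0) 2
    nlinarith
  rw [nodalSlope_sub]
  refine (integral_sq_deriv_sub_le (hx i hi) (forall_hasDerivWithinAt_mono hu hsub)
    (forall_hasDerivWithinAt_mono hu' hsub) (fun t ht => hK t (hsub ht)) _).trans ?_
  exact add_le_add_left hKh _

theorem abs_nodalSlope_sub_nodalSlope_le (hx0 : x 0 = 0) (hxn : x n = 1)
    (hx : ∀ i < n, x i < x (i + 1)) (hH : ∀ i < n, x (i + 1) - x i ≤ H)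
    (hu : ∀ t ∈ Icc (0:ℝ) 1, HasDerivWithinAt u (u' t) (Icc 0 1) t)
    (hu' : ∀ t ∈ Icc (0:ℝ) 1, HasDerivWithinAt u' (-f t) (Icc 0 1) t)
    (hf : ∀ t ∈ Icc (0:ℝ) 1, HasDerivWithinAt f (f' t) (Icc 0 1) t)
    (hK : ∀ t ∈ Icc (0:ℝ) 1, |f' t| ≤ K) {W : ℕ → ℝ}
    (hW : ∀ j < n - 1,
      nodalSlope x W j - nodalSlope x W (j + 1) = (x (j + 2) - x j) / 2 * f (x (j + 1)))
    {j : ℕ} (hj : j < n - 1) :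
    |nodalSlope x (fun i => u (x i) - W i) j - nodalSlope x (fun i => u (x i) - W i) (j + 1)| ≤
      K * H * (x (j + 2) - x j) := by
  have hsub : Icc (x j) (x (j + 2)) ⊆ Icc 0 1 := Icc_subset_Icc
    (mem_Icc_zero_one_of_le hx0 hxn hx (by omega)).1
    (mem_Icc_zero_one_of_le hx0 hxn hx (by omega)).2
  have hK0 : 0 ≤ K := (abs_nonneg _).trans (hK 0 (left_mem_Icc.2 zero_le_one))
  have hmax : max (x (j + 1) - x j) (x (j + 1 + 1) - x (j + 1)) ≤ H :=
    max_le (hH j (by omega)) (hH (j + 1) (by omega))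
  calc _ = |(u (x (j + 1)) - u (x j)) / (x (j + 1) - x j) -
            (u (x (j + 1 + 1)) - u (x (j + 1))) / (x (j + 1 + 1) - x (j + 1)) -
            (x (j + 1 + 1) - x j) / 2 * f (x (j + 1))| := by
          rw [nodalSlope_sub, nodalSlope_sub, ← hW j hj]
          congr 1
          simp only [nodalSlope]
          ring_nf
    _ ≤ K * max (x (j + 1) - x j) (x (j + 1 + 1) - x (j + 1)) * (x (j + 1 + 1) - x j) :=
        abs_slope_sub_slope_sub_le (hx j (by omega)) (hx (j + 1) (by omega))
          (forall_hasDerivWithinAt_mono hu hsub) (forall_hasDerivWithinAt_mono hu' hsub)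
          (forall_hasDerivWithinAt_mono hf hsub) (fun t ht => hK t (hsub ht))
    _ ≤ K * H * (x (j + 2) - x j) :=
        mul_le_mul_of_nonneg_right (mul_le_mul_of_nonneg_left hmax hK0)
          (by linarith [hx j (by omega), hx (j + 1) (by omega)])

theorem sum_integral_sq_deriv_sub_nodalSlope_le (hx0 : x 0 = 0) (hxn : x n = 1)
    (hx : ∀ i < n, x i < x (i + 1)) (hH : ∀ i < n, x (i + 1) - x i ≤ H)
    (hu : ∀ t ∈ Icc (0:ℝ) 1, HasDerivWithinAt u (u' t) (Icc 0 1) t)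
    (hu' : ∀ t ∈ Icc (0:ℝ) 1, HasDerivWithinAt u' (-f t) (Icc 0 1) t)
    (hf : ∀ t ∈ Icc (0:ℝ) 1, HasDerivWithinAt f (f' t) (Icc 0 1) t)
    (hfK : ∀ t ∈ Icc (0:ℝ) 1, |f t| ≤ K) (hf'K : ∀ t ∈ Icc (0:ℝ) 1, |f' t| ≤ K)
    (hu0 : u 0 = 0) (hu1 : u 1 = 0) {W : ℕ → ℝ} (hW0 : W 0 = 0) (hWn : W n = 0)
    (hW : ∀ j < n - 1,
      nodalSlope x W j - nodalSlope x W (j + 1) = (x (j + 2) - x j) / 2 * f (x (j + 1))) :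
    ∑ i ∈ Finset.range n, ∫ t in x i..x (i + 1), (u' t - nodalSlope x W i) ^ 2 ≤
      5 * (K * H) ^ 2 := by
  set E : ℕ → ℝ := fun i => u (x i) - W i
  have hn : 0 < n := Nat.pos_of_ne_zero fun h => zero_ne_one (hx0.symm.trans (h ▸ hxn))
  have hKH0 : 0 ≤ K * H := mul_nonneg ((abs_nonneg _).trans (hfK 0 (left_mem_Icc.2 zero_le_one)))
    ((sub_pos.2 (hx 0 hn)).le.trans (hH 0 hn))
  have hjumps : ∑ j ∈ Finset.range (n - 1), |nodalSlope x E j - nodalSlope x E (j + 1)| ≤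
      2 * (K * H) := by
    calc _ ≤ ∑ j ∈ Finset.range (n - 1), K * H * (x (j + 2) - x j) :=
          Finset.sum_le_sum fun j hj => abs_nodalSlope_sub_nodalSlope_le hx0 hxn hx hH hu hu' hf
            hf'K hW (Finset.mem_range.1 hj)
      _ ≤ K * H * (2 * (x n - x 0)) := by
          rw [← Finset.mul_sum]
          exact mul_le_mul_of_nonneg_left (sum_range_sub_two_le hx) hKH0
      _ = 2 * (K * H) := by rw [hxn, hx0]; ring
  have henergy := sum_mul_nodalSlope_sq_le hx (E := E) (by simp [E, hx0, hu0, hW0])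
    (by simp [E, hxn, hu1, hWn])
  rw [hxn, hx0, sub_zero, one_mul] at henergy
  calc _ ≤ ∑ i ∈ Finset.range n,
        ((K * H) ^ 2 * (x (i + 1) - x i) + (x (i + 1) - x i) * nodalSlope x E i ^ 2) :=
        Finset.sum_le_sum fun i hi => integral_sq_deriv_sub_nodalSlope_le hx0 hxn hx hH hu hu'
          (fun t ht => (abs_neg (f t)).trans_le (hfK t ht)) W (Finset.mem_range.1 hi)
    _ = (K * H) ^ 2 + ∑ i ∈ Finset.range n, (x (i + 1) - x i) * nodalSlope x E i ^ 2 := by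
        rw [Finset.sum_add_distrib, ← Finset.mul_sum, Finset.sum_range_sub, hxn, hx0, sub_zero,
          mul_one]
    _ ≤ (K * H) ^ 2 + (2 * (K * H)) ^ 2 := by
        gcongr
        exact henergy.trans (pow_le_pow_left₀ (Finset.sum_nonneg fun j _ => abs_nonneg _)
          hjumps 2)
    _ = 5 * (K * H) ^ 2 := by ring

end Mesh

theorem abs_le_iSup_abs_of_continuousOn {g : ℝ → ℝ} {s : Set ℝ} (hs : IsCompact s)
    (hg : ContinuousOn g s) {t : ℝ} (ht : t ∈ s) : |g t| ≤ ⨆ y : s, |g y| := by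
  obtain ⟨C, hC⟩ := hs.exists_bound_of_continuousOn hg
  exact le_ciSup (f := fun y : s => |g y|) ⟨C, by rintro _ ⟨y, rfl⟩; exact hC y y.2⟩ ⟨t, ht⟩

theorem sum_Icc_one_eq_sum_range {M : Type*} [AddCommMonoid M] (g : ℕ → M) (n : ℕ) :
    ∑ i ∈ Finset.Icc 1 n, g i = ∑ i ∈ Finset.range n, g (i + 1) := by
  rw [← Finset.Ico_add_one_right_eq_Icc, Finset.sum_Ico_eq_sum_range, Nat.add_sub_cancel]
  simp only [add_comm 1]

/- On each subinterval `[x_{i-1}, x_i]` the piecewise linear interpolant `v_h` of the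
nodal values `w` has constant derivative `(w_i - w_{i-1})/h_i`, so the squared energy
norm `∫₀¹ (u' - v_h')²` is the sum of the corresponding subinterval integrals. -/
theorem stmt7 :
    ∃ C > (0:ℝ),
      ∀ (n : ℕ) (hn : 2 ≤ n),
      ∀ (x : ℕ → ℝ), x 0 = 0 → x n = 1 → (∀ i, i < n → x i < x (i + 1)) →
      ∀ f f' f'' : ℝ → ℝ,
        (∀ t ∈ Set.Icc (0:ℝ) 1, HasDerivWithinAt f (f' t) (Set.Icc 0 1) t) →
        (∀ t ∈ Set.Icc (0:ℝ) 1, HasDerivWithinAt f' (f'' t) (Set.Icc 0 1) t) →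
        ContinuousOn f'' (Set.Icc (0:ℝ) 1) →
      ∀ u u' u'' : ℝ → ℝ,
        (∀ t ∈ Set.Icc (0:ℝ) 1, HasDerivWithinAt u (u' t) (Set.Icc 0 1) t) →
        (∀ t ∈ Set.Icc (0:ℝ) 1, HasDerivWithinAt u' (u'' t) (Set.Icc 0 1) t) →
        ContinuousOn u'' (Set.Icc (0:ℝ) 1) →
        (∀ t ∈ Set.Ioo (0:ℝ) 1, -u'' t = f t) →
        u 0 = 0 → u 1 = 0 →
      ∀ w : Fin (n - 1) → ℝ,
        (stiff n x).mulVec w =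
          (weightMat n x).mulVec (fun j : Fin (n - 1) => f (x ((j : ℕ) + 1))) →
      Real.sqrt (∑ i ∈ Finset.Icc 1 n,
          ∫ t in x (i - 1)..x i,
            (u' t - (extendVec n w i - extendVec n w (i - 1)) / (x i - x (i - 1))) ^ 2)
        ≤ C * ((Finset.Icc 1 n).sup'
              (Finset.nonempty_Icc.mpr (by omega)) fun j => x j - x (j - 1)) *
            ((⨆ t : Set.Icc (0:ℝ) 1, |f'' t|) +
              Real.sqrt (∫ t in (0:ℝ)..1, f t ^ 2)) := by
  refine ⟨42, by norm_num, ?_⟩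
  intro n hn x hx0 hxn hx f f' f'' hf hf' hf'' u u' u'' hu hu' hu'' hode hu0 hu1 w hw
  set H := (Finset.Icc 1 n).sup' (Finset.nonempty_Icc.mpr (by omega)) fun j => x j - x (j - 1)
  set M := ⨆ t : Set.Icc (0:ℝ) 1, |f'' t|
  set N := √(∫ t in (0:ℝ)..1, f t ^ 2)
  have hH : ∀ i < n, x (i + 1) - x i ≤ H := fun i hi => by
    simpa using Finset.le_sup' (fun j => x j - x (j - 1))
      (Finset.mem_Icc.2 ⟨Nat.le_add_left 1 i, hi⟩)
  have hM : ∀ t ∈ Icc (0:ℝ) 1, |f'' t| ≤ M := fun t ht =>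
    abs_le_iSup_abs_of_continuousOn isCompact_Icc hf'' ht
  have hN : ∫ t in (0:ℝ)..1, f t ^ 2 ≤ N ^ 2 :=
    (Real.sq_sqrt (intervalIntegral.integral_nonneg zero_le_one fun t _ => sq_nonneg _)).ge
  have hK := abs_le_and_abs_deriv_le_of_integral_sq_le hf hf' hM (Real.sqrt_nonneg _) hN
  have hu''f : EqOn u'' (fun t => -f t) (Icc 0 1) :=
    EqOn.of_subset_closure (fun t ht => by simp [← hode t ht]) hu''
      (fun t ht => (hf t ht).continuousWithinAt.neg) Ioo_subset_Icc_self
      (closure_Ioo zero_ne_one).ge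
  have herr := sum_integral_sq_deriv_sub_nodalSlope_le hx0 hxn hx hH hu
    (fun t ht => (hu' t ht).congr_deriv (hu''f ht)) hf (fun t ht => (hK t ht).1)
    (fun t ht => (hK t ht).2) hu0 hu1 (extendVec_zero w) (extendVec_of_le w le_rfl)
    fun j hj => nodalSlope_sub_nodalSlope_of_stiff_mulVec_eq (F := fun i => f (x i)) hw hj
  have hH0 : 0 ≤ H := (sub_pos.2 (hx 0 (by omega))).le.trans (hH 0 (by omega))
  have hM0 : 0 ≤ M := (abs_nonneg _).trans (hM 0 (left_mem_Icc.2 zero_le_one))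
  have hKH : 0 ≤ (14 * N + M) * H := mul_nonneg (by positivity) hH0
  rw [sum_Icc_one_eq_sum_range]
  simp only [Nat.add_sub_cancel]
  calc _ ≤ √((3 * ((14 * N + M) * H)) ^ 2) := Real.sqrt_le_sqrt (herr.trans (by nlinarith))
    _ = 3 * ((14 * N + M) * H) := Real.sqrt_sq (by positivity)
    _ ≤ 42 * H * (M + N) := by nlinarith [mul_nonneg hM0 hH0]
end

section
/- Let u ∈ C²([0,1]) satisfy −u''(x) = f(x) for all x ∈ (0,1) with u(0) = u(1) = 0, where f : [0,1] → ℝ is continuous. Then for every j with 1 ≤ j ≤ n−1, u(x_j) = Σ_{i=1}^{n−1} G(x_j, x_i) · ∫₀¹ f(x)φ_i(x) dx. -/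
open MeasureTheory

/-- The hat (nodal basis) function `φ_j` associated with the nodes `x`. -/
noncomputable def hatFn (x : ℕ → ℝ) (j : ℕ) : ℝ → ℝ := fun t =>
  if x (j - 1) ≤ t ∧ t ≤ x j then (t - x (j - 1)) / (x j - x (j - 1))
  else if x j ≤ t ∧ t ≤ x (j + 1) then (x (j + 1) - t) / (x (j + 1) - x j)
  else 0

/-!
Testing `-u'' = f` against `φ_i` and integrating by parts on the two halves of its support
turns `∫ f φ_i` into the jump `u[x_{i-1}, x_i] - u[x_i, x_{i+1}]` of the difference quotients of
`u` at `x_i`. Summing these jumps against `G(x_j, x_i)` by parts leaves the difference quotients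
of `G(x_j, ·)` times the increments of `u`; as `G(x_j, ·)` is affine with slope `1 - x_j` to the
left of the node `x_j` and `-x_j` to its right, and vanishes at `0` and `1`, the sum telescopes to
`(1 - x_j) u(x_j) + x_j u(x_j) = u(x_j)`.
-/

open Set intervalIntegral
open scoped Interval

theorem Finset.sum_range_mul_sub_eq_sum_sub_mul {R : Type*} [CommRing R] (g S : ℕ → R) (N : ℕ) :
    ∑ i ∈ Finset.range N, g (i + 1) * (S i - S (i + 1)) =
      ∑ i ∈ Finset.range (N + 1), (g (i + 1) - g i) * S i + g 0 * S 0 - g (N + 1) * S N := by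
  induction N with
  | zero => simp; ring
  | succ N ih =>
    rw [Finset.sum_range_succ, ih, Finset.sum_range_succ _ (N + 1)]
    ring

theorem sub_mul_slope_eq_slope_mul_sub (F v : ℝ → ℝ) (p q : ℝ) :
    (F q - F p) * slope v p q = slope F p q * (v q - v p) := by
  rw [slope_def_field, slope_def_field]
  ring

section Green

variable {a s p q : ℝ}

theorem greenFn_zero_right (ha : 0 ≤ a) : greenFn a 0 = 0 := by
  simp [greenFn, ha]

theorem greenFn_one_right (ha : a ≤ 1) : greenFn a 1 = 0 := by
  rcases ha.eq_or_lt with rfl | ha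
  · simp [greenFn]
  · simp [greenFn, ha.not_ge]

theorem greenFn_of_le (hs : s ≤ a) : greenFn a s = s * (1 - a) := if_pos hs

theorem greenFn_of_ge (hs : a ≤ s) : greenFn a s = a * (1 - s) := by
  rcases hs.eq_or_lt with rfl | hs
  · exact if_pos le_rfl
  · exact if_neg hs.not_ge

theorem slope_greenFn_of_le (hpq : p ≠ q) (hp : p ≤ a) (hq : q ≤ a) :
    slope (greenFn a) p q = 1 - a := by
  rw [slope_def_field, greenFn_of_le hp, greenFn_of_le hq]
  field_simp [sub_ne_zero.2 hpq.symm]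

theorem slope_greenFn_of_ge (hpq : p ≠ q) (hp : a ≤ p) (hq : a ≤ q) :
    slope (greenFn a) p q = -a := by
  rw [slope_def_field, greenFn_of_ge hp, greenFn_of_ge hq]
  field_simp [sub_ne_zero.2 hpq.symm]
  ring

end Green

theorem sum_greenFn_mul_slope_sub_slope {x : ℕ → ℝ} {v : ℝ → ℝ} {N j : ℕ}
    (hx : StrictMonoOn x (Iic (N + 1))) (hx0 : x 0 = 0) (hxN : x (N + 1) = 1)
    (hj : j ≤ N + 1) (hv0 : v 0 = 0) (hv1 : v 1 = 0) :
    ∑ i ∈ Finset.range N, greenFn (x j) (x (i + 1)) *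
      (slope v (x i) (x (i + 1)) - slope v (x (i + 1)) (x (i + 2))) = v (x j) := by
  set a := x j
  have hle : ∀ {k l}, k ≤ l → l ≤ N + 1 → x k ≤ x l := fun hkl hl =>
    hx.monotoneOn (mem_Iic.2 (hkl.trans hl)) (mem_Iic.2 hl) hkl
  have hne : ∀ i ≤ N, x i ≠ x (i + 1) := fun i hi =>
    (hx (mem_Iic.2 (by omega)) (mem_Iic.2 (by omega)) (Nat.lt_succ_self i)).ne
  have ha0 : 0 ≤ a := hx0 ▸ hle (Nat.zero_le j) hj
  have ha1 : a ≤ 1 := hxN ▸ hle hj le_rfl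
  rw [Finset.sum_range_mul_sub_eq_sum_sub_mul (fun k => greenFn a (x k))
    (fun k => slope v (x k) (x (k + 1)))]
  simp only [hx0, hxN, greenFn_zero_right ha0, greenFn_one_right ha1, zero_mul, add_zero,
    sub_zero, sub_mul_slope_eq_slope_mul_sub (greenFn a) v]
  rw [← Finset.sum_range_add_sum_Ico _ hj]
  have hleft : ∑ i ∈ Finset.range j, slope (greenFn a) (x i) (x (i + 1)) *
      (v (x (i + 1)) - v (x i)) = (1 - a) * (v a - v 0) := by
    rw [Finset.sum_congr rfl fun i hi => by
        have hi := Finset.mem_range.1 hi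
        rw [slope_greenFn_of_le (hne i (by omega)) (hle hi.le hj) (hle hi hj)],
      ← Finset.mul_sum, Finset.sum_range_sub (fun k => v (x k)), hx0]
  have hright : ∑ i ∈ Finset.Ico j (N + 1), slope (greenFn a) (x i) (x (i + 1)) *
      (v (x (i + 1)) - v (x i)) = -a * (v 1 - v a) := by
    rw [Finset.sum_congr rfl fun i hi => by
        have hi := Finset.mem_Ico.1 hi
        rw [slope_greenFn_of_ge (hne i (by omega)) (hle hi.1 (by omega))
          (hle (by omega) (by omega))],
      ← Finset.mul_sum, Finset.sum_Ico_sub (fun k => v (x k)) hj, hxN]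
  rw [hleft, hright, hv0, hv1]
  ring

theorem integral_mul_deriv2_of_hasDerivAt {u u' u'' w : ℝ → ℝ} {a b α : ℝ}
    (hu : ∀ t ∈ [[a, b]], HasDerivWithinAt u (u' t) [[a, b]] t)
    (hu' : ∀ t ∈ [[a, b]], HasDerivWithinAt u' (u'' t) [[a, b]] t)
    (hu'' : IntervalIntegrable u'' volume a b) (hw : ∀ t, HasDerivAt w α t) :
    ∫ t in a..b, w t * u'' t = w b * u' b - w a * u' a - α * (u b - u a) := by
  have hu'_int : IntervalIntegrable u' volume a b :=
    ContinuousOn.intervalIntegrable fun t ht => (hu' t ht).continuousWithinAt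
  have hftc : ∫ t in a..b, u' t = u b - u a :=
    integral_eq_sub_of_hasDeriv_right (fun t ht => (hu t ht).continuousWithinAt)
      (fun t ht => ((hu t (mem_Icc_of_Ioo ht)).hasDerivAt
        (Icc_mem_nhds ht.1 ht.2)).hasDerivWithinAt) hu'_int
  rw [integral_mul_deriv_eq_deriv_mul_of_hasDerivWithinAt (fun t _ => (hw t).hasDerivWithinAt)
    hu' intervalIntegrable_const hu'', intervalIntegral.integral_const_mul, hftc]

section Hat

variable {x : ℕ → ℝ} {i : ℕ} {t : ℝ}

theorem hatFn_eq_zero_of_le (hl : x (i - 1) < x i) (ht : t ≤ x (i - 1)) : hatFn x i t = 0 := by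
  rcases ht.eq_or_lt with rfl | ht
  · simp [hatFn, hl.le]
  · simp [hatFn, ht.not_ge, (ht.trans hl).not_ge]

theorem hatFn_eq_zero_of_ge (hr : x i < x (i + 1)) (ht : x (i + 1) ≤ t) : hatFn x i t = 0 := by
  rcases ht.eq_or_lt with rfl | ht
  · simp [hatFn, hr.not_ge, hr.le]
  · simp [hatFn, ht.not_ge, (hr.trans ht).not_ge]

theorem hatFn_eqOn_left :
    EqOn (hatFn x i) (fun t => (t - x (i - 1)) / (x i - x (i - 1))) (Icc (x (i - 1)) (x i)) :=
  fun _ ht => if_pos ht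

theorem hatFn_eqOn_right (hl : x (i - 1) < x i) (hr : x i < x (i + 1)) :
    EqOn (hatFn x i) (fun t => (x (i + 1) - t) / (x (i + 1) - x i)) (Icc (x i) (x (i + 1))) := by
  intro t ht
  rcases ht.1.eq_or_lt with rfl | h
  · simp [hatFn, hl.le, (sub_pos.2 hl).ne', (sub_pos.2 hr).ne']
  · simp [hatFn, h.not_ge, ht.1, ht.2]

theorem integral_hatFn_mul_deriv2 {u u' u'' : ℝ → ℝ}
    (h0 : 0 ≤ x (i - 1)) (hl : x (i - 1) < x i) (hr : x i < x (i + 1)) (h1 : x (i + 1) ≤ 1)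
    (hu : ∀ t ∈ Icc (0:ℝ) 1, HasDerivWithinAt u (u' t) (Icc 0 1) t)
    (hu' : ∀ t ∈ Icc (0:ℝ) 1, HasDerivWithinAt u' (u'' t) (Icc 0 1) t)
    (hu'' : ContinuousOn u'' (Icc 0 1)) :
    ∫ t in (0:ℝ)..1, hatFn x i t * u'' t =
      slope u (x i) (x (i + 1)) - slope u (x (i - 1)) (x i) := by
  set c := x (i - 1)
  set m := x i
  set d := x (i + 1)
  have piece : ∀ a b, 0 ≤ a → a ≤ b → b ≤ 1 → ∀ (w : ℝ → ℝ) α, (∀ t, HasDerivAt w α t) →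
      EqOn (hatFn x i) w (Icc a b) →
      IntervalIntegrable (fun t => hatFn x i t * u'' t) volume a b ∧
        ∫ t in a..b, hatFn x i t * u'' t = w b * u' b - w a * u' a - α * (u b - u a) := by
    intro a b ha hab hb w α hw hhat
    rw [← uIcc_of_le hab] at hhat
    have hsub : [[a, b]] ⊆ Icc 0 1 := uIcc_of_le hab ▸ Icc_subset_Icc ha hb
    have heq : EqOn (fun t => hatFn x i t * u'' t) (fun t => w t * u'' t) [[a, b]] :=
      fun t ht => congrArg (· * u'' t) (hhat ht)
    have hu''_int : IntervalIntegrable u'' volume a b := (hu''.mono hsub).intervalIntegrable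
    refine ⟨(((HasDerivAt.continuousOn fun t _ => hw t).mul (hu''.mono hsub)).congr
      heq).intervalIntegrable, ?_⟩
    rw [integral_congr heq]
    exact integral_mul_deriv2_of_hasDerivAt (fun t ht => (hu t (hsub ht)).mono hsub)
      (fun t ht => (hu' t (hsub ht)).mono hsub) hu''_int hw
  obtain ⟨i₁, e₁⟩ := piece 0 c le_rfl h0 (by linarith) 0 0 (fun _ => hasDerivAt_const _ _)
    fun t ht => hatFn_eq_zero_of_le hl ht.2
  obtain ⟨i₂, e₂⟩ := piece c m h0 hl.le (by linarith) _ _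
    (fun t => ((hasDerivAt_id t).sub_const c).div_const (m - c)) hatFn_eqOn_left
  obtain ⟨i₃, e₃⟩ := piece m d (by linarith) hr.le h1 _ _
    (fun t => ((hasDerivAt_id t).const_sub d).div_const (d - m)) (hatFn_eqOn_right hl hr)
  obtain ⟨i₄, e₄⟩ := piece d 1 (by linarith) h1 le_rfl 0 0 (fun _ => hasDerivAt_const _ _)
    fun t ht => hatFn_eq_zero_of_ge hr ht.1
  rw [← integral_add_adjacent_intervals ((i₁.trans i₂).trans i₃) i₄,
    ← integral_add_adjacent_intervals (i₁.trans i₂) i₃, ← integral_add_adjacent_intervals i₁ i₂,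
    e₁, e₂, e₃, e₄, slope_def_field, slope_def_field]
  simp only [Pi.zero_apply, id]
  field_simp [(sub_pos.2 hl).ne', (sub_pos.2 hr).ne']
  ring

end Hat

theorem stmt8_general
    (n : ℕ)
    (x : ℕ → ℝ) (hx0 : x 0 = 0) (hxn : x n = 1)
    (hmono : ∀ i, i < n → x i < x (i + 1))
    (u u' u'' f : ℝ → ℝ)
    (hu1 : ∀ t ∈ Set.Icc (0:ℝ) 1, HasDerivWithinAt u (u' t) (Set.Icc 0 1) t)
    (hu2 : ∀ t ∈ Set.Icc (0:ℝ) 1, HasDerivWithinAt u' (u'' t) (Set.Icc 0 1) t)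
    (hu2c : ContinuousOn u'' (Set.Icc (0:ℝ) 1))
    (hf : ContinuousOn f (Set.Icc (0:ℝ) 1))
    (hode : ∀ t ∈ Set.Ioo (0:ℝ) 1, -u'' t = f t)
    (hubc0 : u 0 = 0) (hubc1 : u 1 = 0) :
    ∀ j, 1 ≤ j → j ≤ n - 1 →
      u (x j) = ∑ i : Fin (n - 1),
        greenFn (x j) (x ((i : ℕ) + 1)) *
          ∫ t in (0:ℝ)..1, f t * hatFn x ((i : ℕ) + 1) t := by
  intro j hj1 hjn
  obtain ⟨N, rfl⟩ : ∃ N, n = N + 1 := ⟨n - 1, by omega⟩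
  have hx : StrictMonoOn x (Iic (N + 1)) := strictMonoOn_Iic_of_lt_succ hmono
  have hx01 : ∀ k ≤ N + 1, 0 ≤ x k ∧ x k ≤ 1 := fun k hk =>
    ⟨hx0 ▸ hx.monotoneOn (mem_Iic.2 (Nat.zero_le _)) (mem_Iic.2 hk) (Nat.zero_le k),
      hxn ▸ hx.monotoneOn (mem_Iic.2 hk) (mem_Iic.2 le_rfl) hk⟩
  have hf_eq : EqOn (fun t => -u'' t) f (Icc 0 1) :=
    EqOn.of_subset_closure hode hu2c.neg hf Ioo_subset_Icc_self (by rw [closure_Ioo zero_ne_one])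
  have hf_hat : ∀ i < N, ∫ t in (0:ℝ)..1, f t * hatFn x (i + 1) t =
      slope u (x i) (x (i + 1)) - slope u (x (i + 1)) (x (i + 2)) := by
    intro i hi
    rw [integral_congr (g := fun t => -(hatFn x (i + 1) t * u'' t)) fun t ht => by
        rw [← hf_eq (uIcc_of_le (zero_le_one' ℝ) ▸ ht), neg_mul, mul_comm],
      intervalIntegral.integral_neg, integral_hatFn_mul_deriv2 (x := x) (i := i + 1)
        (hx01 i (by omega)).1 (hmono i (by omega)) (hmono (i + 1) (by omega))
        (hx01 (i + 2) (by omega)).2 hu1 hu2 hu2c, neg_sub]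
    rfl
  rw [Nat.add_sub_cancel, Fin.sum_univ_eq_sum_range (fun i => greenFn (x j) (x (i + 1)) *
      ∫ t in (0:ℝ)..1, f t * hatFn x (i + 1) t) N,
    Finset.sum_congr rfl fun i hi => congrArg _ (hf_hat i (Finset.mem_range.1 hi))]
  exact (sum_greenFn_mul_slope_sub_slope hx hx0 hxn (by omega) hubc0 hubc1).symm

theorem stmt8
    (n : ℕ) (hn : 2 ≤ n)
    (x : ℕ → ℝ) (hx0 : x 0 = 0) (hxn : x n = 1)
    (hmono : ∀ i, i < n → x i < x (i + 1))
    (u u' u'' f : ℝ → ℝ)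
    (hu1 : ∀ t ∈ Set.Icc (0:ℝ) 1, HasDerivWithinAt u (u' t) (Set.Icc 0 1) t)
    (hu2 : ∀ t ∈ Set.Icc (0:ℝ) 1, HasDerivWithinAt u' (u'' t) (Set.Icc 0 1) t)
    (hu2c : ContinuousOn u'' (Set.Icc (0:ℝ) 1))
    (hf : ContinuousOn f (Set.Icc (0:ℝ) 1))
    (hode : ∀ t ∈ Set.Ioo (0:ℝ) 1, -u'' t = f t)
    (hubc0 : u 0 = 0) (hubc1 : u 1 = 0) :
    ∀ j, 1 ≤ j → j ≤ n - 1 →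
      u (x j) = ∑ i : Fin (n - 1),
        greenFn (x j) (x ((i : ℕ) + 1)) *
          ∫ t in (0:ℝ)..1, f t * hatFn x ((i : ℕ) + 1) t :=
  stmt8_general n x hx0 hxn hmono u u' u'' f hu1 hu2 hu2c hf hode hubc0 hubc1
end
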